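/- arXiv:0811.3284 — 10 statements merged into one kernel-verified Lean document; each statement's English description precedes it below -/
import Mathlib

section
/- Consider n+1 points s₀, s₁, …, sₙ in ℝ² with sᵢ ≠ s₀ for i ≥ 1, noise N ≥ 0, and define SINR(s₀, q) = dist(s₀,q)^{-2} / (Σ_{i≥1} dist(sᵢ,q)^{-2} + N) for q ∉ {s₀,…,sₙ}. If p ∉ {s₀,…,sₙ} satisfies SINR(s₀, p) ≥ 1, then for every point q in the open segment between s₀ and p (with q ∉ {s₀,…,sₙ}), SINR(s₀, q) > SINR(s₀, p). -/
open RealInnerProductSpace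

lemma aux_dist {E : Type*} [NormedAddCommGroup E] [InnerProductSpace ℝ E]
    (s0 si p : E) (t : ℝ) (ht0 : 0 < t) (ht1 : t < 1)
    (hne : si ≠ s0) (hle : dist s0 p ≤ dist si p) (hp0 : p ≠ s0) (hpi : p ≠ si) :
    t * dist si p < dist si ((1 - t) • s0 + t • p) := by
  have hd0 : 0 < dist s0 p := dist_pos.2 (fun h => hp0 h.symm)
  have hdi : 0 < dist si p := dist_pos.2 (fun h => hpi h.symm)
  have hdecomp : si - ((1 - t) • s0 + t • p) = (si - p) + (1 - t) • (p - s0) := by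
    module
  have hsq : dist si ((1 - t) • s0 + t • p) ^ 2
      = dist si p ^ 2 + 2 * (1 - t) * ⟪si - p, p - s0⟫ + (1 - t) ^ 2 * dist s0 p ^ 2 := by
    rw [dist_eq_norm, hdecomp, norm_add_sq_real, real_inner_smul_right, norm_smul,
      Real.norm_eq_abs, abs_of_pos (by linarith), ← dist_eq_norm, ← dist_eq_norm,
      dist_comm p s0]
    ring
  have hCSle : ⟪si - p, s0 - p⟫ ≤ dist si p * dist s0 p := by
    rw [dist_eq_norm, dist_eq_norm]
    exact real_inner_le_norm _ _
  have hinner : ⟪si - p, p - s0⟫ = -⟪si - p, s0 - p⟫ := by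
    rw [show p - s0 = -(s0 - p) by abel, inner_neg_right]
  refine lt_of_pow_lt_pow_left₀ 2 dist_nonneg ?_
  rw [hsq]
  rcases eq_or_lt_of_le hle with heq | hlt
  · -- dist s0 p = dist si p, need strict Cauchy-Schwarz
    have hCSlt : ⟪si - p, s0 - p⟫ < dist si p * dist s0 p := by
      rcases lt_or_eq_of_le hCSle with h | h
      · exact h
      · exfalso
        rw [dist_eq_norm, dist_eq_norm] at h
        have hsm := inner_eq_norm_mul_iff_real.1 h
        rw [dist_eq_norm, dist_eq_norm] at heq
        rw [heq] at hsm
        have hn : ‖si - p‖ ≠ 0 := by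
          rw [← dist_eq_norm]; exact ne_of_gt hdi
        have h2 : si - p = s0 - p := smul_right_injective E hn hsm
        exact hne (by have := congrArg (fun x => x + p) h2; simpa using this)
    rw [hinner, ← heq] at *
    nlinarith [mul_pos (show (0:ℝ) < 1 - t by linarith)
      (show (0:ℝ) < dist s0 p * dist s0 p - ⟪si - p, s0 - p⟫ by linarith)]
  · nlinarith [hinner,
      mul_nonneg (show (0:ℝ) ≤ 1 - t by linarith) (sub_nonneg.2 hCSle),
      mul_pos (mul_pos (show (0:ℝ) < 1 - t by linarith) (sub_pos.2 hlt))
        (show (0:ℝ) < (1 + t) * dist si p - (1 - t) * dist s0 p by nlinarith)]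

theorem stmt1 (n : ℕ) (s : Fin (n + 1) → EuclideanSpace ℝ (Fin 2)) (N : ℝ)
    (hs : ∀ i, i ≠ 0 → s i ≠ s 0) (hN : 0 ≤ N)
    (SINR : EuclideanSpace ℝ (Fin 2) → ℝ)
    (hSINR : ∀ q, SINR q =
      (dist (s 0) q ^ 2)⁻¹ /
        ((∑ i ∈ Finset.univ.filter (· ≠ (0 : Fin (n + 1))), (dist (s i) q ^ 2)⁻¹) + N))
    (p : EuclideanSpace ℝ (Fin 2)) (hp : p ∉ Set.range s) (h1 : 1 ≤ SINR p) :
    ∀ q ∈ openSegment ℝ (s 0) p, q ∉ Set.range s → SINR p < SINR q := by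
  intro q hq hq'
  obtain ⟨a, b, ha, hb, hab, hqe⟩ := hq
  have hb1 : b < 1 := by linarith
  have hqe' : q = (1 - b) • s 0 + b • p := by
    rw [← hqe, show a = 1 - b by linarith]
  have hpne : ∀ i, p ≠ s i := fun i h => hp ⟨i, h.symm⟩
  have hqne : ∀ i, q ≠ s i := fun i h => hq' ⟨i, h.symm⟩
  set F := Finset.univ.filter (· ≠ (0 : Fin (n + 1))) with hF
  set Sp := ∑ i ∈ F, (dist (s i) p ^ 2)⁻¹ with hSp
  set Sq := ∑ i ∈ F, (dist (s i) q ^ 2)⁻¹ with hSq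
  have hdp0 : 0 < dist (s 0) p := dist_pos.2 (fun h => hpne 0 h.symm)
  have hA : 0 < (dist (s 0) p ^ 2)⁻¹ := by positivity
  have hterm : ∀ i ∈ F, (0:ℝ) < (dist (s i) p ^ 2)⁻¹ := by
    intro i _
    have : 0 < dist (s i) p := dist_pos.2 (fun h => hpne i h.symm)
    positivity
  have htermq : ∀ i ∈ F, (0:ℝ) < (dist (s i) q ^ 2)⁻¹ := by
    intro i _
    have : 0 < dist (s i) q := dist_pos.2 (fun h => hqne i h.symm)
    positivity
  have hSpnn : 0 ≤ Sp := Finset.sum_nonneg (fun i hi => (hterm i hi).le)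
  have hSqnn : 0 ≤ Sq := Finset.sum_nonneg (fun i hi => (htermq i hi).le)
  have hD : 0 < Sp + N := by
    rcases lt_or_eq_of_le (by linarith : (0:ℝ) ≤ Sp + N) with h | h
    · exact h
    · exfalso
      have := hSINR p
      rw [← hSp, ← h, div_zero] at this
      rw [this] at h1; linarith
  have hAD : Sp + N ≤ (dist (s 0) p ^ 2)⁻¹ := by
    have := hSINR p
    rw [← hSp] at this
    rw [this, le_div_iff₀ hD, one_mul] at h1
    exact h1
  -- distances from s 0
  have hdq0 : dist (s 0) q = b * dist (s 0) p := by
    have : s 0 - q = b • (s 0 - p) := by rw [hqe']; module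
    rw [dist_eq_norm, this, norm_smul, Real.norm_eq_abs, abs_of_pos hb, ← dist_eq_norm]
  -- key strict per-station inequality
  have hkey : ∀ i ∈ F, (dist (s i) q ^ 2)⁻¹ < ((b * dist (s i) p) ^ 2)⁻¹ := by
    intro i hi
    have hi0 : i ≠ 0 := by simpa [hF] using hi
    have hle : dist (s 0) p ≤ dist (s i) p := by
      have h1' : (dist (s i) p ^ 2)⁻¹ ≤ Sp :=
        Finset.single_le_sum (fun j hj => (hterm j hj).le) hi
      have h2' : (dist (s i) p ^ 2)⁻¹ ≤ (dist (s 0) p ^ 2)⁻¹ := by linarith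
      have hdi : 0 < dist (s i) p := dist_pos.2 (fun h => hpne i h.symm)
      have hsq : dist (s 0) p ^ 2 ≤ dist (s i) p ^ 2 := by
        rwa [inv_le_inv₀ (by positivity) (by positivity)] at h2'
      exact le_of_pow_le_pow_left₀ two_ne_zero hdi.le hsq
    have haux := aux_dist (s 0) (s i) p b hb hb1 (hs i hi0) hle
      (hpne 0) (hpne i)
    have hdi : 0 < dist (s i) p := dist_pos.2 (fun h => hpne i h.symm)
    have hpos : 0 < b * dist (s i) p := by positivity
    rw [← hqe'] at haux
    have hsqlt : (b * dist (s i) p) ^ 2 < dist (s i) q ^ 2 := by nlinarith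
    exact inv_strictAnti₀ (by positivity) hsqlt
  -- strict denominator inequality and positivity of q-denominator
  have hbb : (0:ℝ) < b ^ 2 := by positivity
  have hmain : b ^ 2 * (Sq + N) < Sp + N ∧ 0 < Sq + N := by
    rcases Finset.eq_empty_or_nonempty F with hFe | hFne
    · have hSp0 : Sp = 0 := by rw [hSp, hFe, Finset.sum_empty]
      have hSq0 : Sq = 0 := by rw [hSq, hFe, Finset.sum_empty]
      have hN' : 0 < N := by rw [hSp0] at hD; linarith
      constructor
      · rw [hSp0, hSq0]
        nlinarith [mul_pos (show (0:ℝ) < 1 - b ^ 2 by nlinarith) hN']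
      · rw [hSq0]; linarith
    · have hsum : ∑ i ∈ F, b ^ 2 * (dist (s i) q ^ 2)⁻¹ < Sp := by
        rw [hSp]
        apply Finset.sum_lt_sum_of_nonempty hFne
        intro i hi
        have := hkey i hi
        have hdi : 0 < dist (s i) p := dist_pos.2 (fun h => hpne i h.symm)
        rw [mul_pow, mul_inv] at this
        calc b ^ 2 * (dist (s i) q ^ 2)⁻¹
            < b ^ 2 * ((b ^ 2)⁻¹ * (dist (s i) p ^ 2)⁻¹) :=
              mul_lt_mul_of_pos_left this hbb
          _ = (dist (s i) p ^ 2)⁻¹ := by field_simp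
      have hsum' : b ^ 2 * Sq < Sp := by
        rw [hSq, Finset.mul_sum]; exact hsum
      obtain ⟨i, hi⟩ := hFne
      have : 0 < Sq := lt_of_lt_of_le (htermq i hi)
        (Finset.single_le_sum (fun j hj => (htermq j hj).le) hi)
      constructor
      · nlinarith [mul_nonneg (show (0:ℝ) ≤ 1 - b ^ 2 by nlinarith) hN]
      · linarith
  obtain ⟨hlt, hDq⟩ := hmain
  -- conclude
  rw [hSINR p, hSINR q, ← hSp, ← hSq, hdq0, div_lt_div_iff₀ hD hDq]
  have hgoal : (dist (s 0) p ^ 2)⁻¹ * (b ^ 2 * (Sq + N)) <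
      (dist (s 0) p ^ 2)⁻¹ * (Sp + N) := mul_lt_mul_of_pos_left hlt hA
  have : ((b * dist (s 0) p) ^ 2)⁻¹ = (b ^ 2)⁻¹ * (dist (s 0) p ^ 2)⁻¹ := by
    rw [mul_pow, mul_inv]
  rw [this]
  rw [show (b ^ 2)⁻¹ * (dist (s 0) p ^ 2)⁻¹ * (Sp + N)
      = (b ^ 2)⁻¹ * ((dist (s 0) p ^ 2)⁻¹ * (Sp + N)) by ring]
  calc (dist (s 0) p ^ 2)⁻¹ * (Sq + N)
      = (b ^ 2)⁻¹ * ((dist (s 0) p ^ 2)⁻¹ * (b ^ 2 * (Sq + N))) := by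
        rw [show (b ^ 2)⁻¹ * ((dist (s 0) p ^ 2)⁻¹ * (b ^ 2 * (Sq + N)))
            = ((b ^ 2)⁻¹ * b ^ 2) * ((dist (s 0) p ^ 2)⁻¹ * (Sq + N)) by ring,
          inv_mul_cancel₀ (ne_of_gt hbb), one_mul]
    _ < (b ^ 2)⁻¹ * ((dist (s 0) p ^ 2)⁻¹ * (Sp + N)) :=
        mul_lt_mul_of_pos_left hgoal (by positivity)
end

section
/- Let s₀, s₁, …, sₙ be distinct-from-s₀ stations in ℝ², N ≥ 0, β ≥ 1, with the network nontrivial (i.e., not both n = 1, N = 0, and β = 1). Then the reception zone Z₀ = {p ∈ ℝ² \ S : SINR(s₀,p) ≥ β} ∪ {s₀} is bounded, and every point of Z₀ is strictly closer to s₀ than to any other station sᵢ. -/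
open Finset

private lemma one_lt_sqrt_of_one_lt {a : ℝ} (ha : 1 < a) : 1 < Real.sqrt a := by
  have := Real.sqrt_lt_sqrt zero_le_one ha
  simpa using this

private lemma sqrt_trick {a d c : ℝ} (ha : 1 < a) (hd : 0 ≤ d) (hc : 0 ≤ c)
    (h : a * d ^ 2 ≤ (d + c) ^ 2) : d ≤ c / (Real.sqrt a - 1) := by
  have h0 : (0:ℝ) ≤ a := by linarith
  have hs : 1 < Real.sqrt a := one_lt_sqrt_of_one_lt ha
  have h2 : Real.sqrt a * d ≤ d + c := by
    have h3 := Real.sqrt_le_sqrt h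
    rwa [Real.sqrt_mul h0, Real.sqrt_sq hd, Real.sqrt_sq (by linarith)] at h3
  rw [le_div_iff₀ (by linarith)]
  nlinarith

set_option maxHeartbeats 1000000 in
theorem stmt2 (n : ℕ) (s : Fin (n + 1) → EuclideanSpace ℝ (Fin 2)) (N β : ℝ)
    (hs : ∀ i, i ≠ 0 → s i ≠ s 0) (hN : 0 ≤ N) (hβ : 1 ≤ β)
    (hnt : ¬(n = 1 ∧ N = 0 ∧ β = 1))
    (Z₀ : Set (EuclideanSpace ℝ (Fin 2)))
    (hZ : Z₀ = {p | p ∉ Set.range s ∧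
        β ≤ (dist (s 0) p ^ 2)⁻¹ /
          ((∑ i ∈ Finset.univ.filter (· ≠ (0 : Fin (n + 1))), (dist (s i) p ^ 2)⁻¹) + N)}
      ∪ {s 0}) :
    Bornology.IsBounded Z₀ ∧ ∀ p ∈ Z₀, ∀ i, i ≠ 0 → dist (s 0) p < dist (s i) p := by
  subst hZ
  have hβ0 : (0:ℝ) < β := lt_of_lt_of_le one_pos hβ
  -- key extraction for points in the set part
  have key : ∀ p : EuclideanSpace ℝ (Fin 2), p ∉ Set.range s →
      β ≤ (dist (s 0) p ^ 2)⁻¹ /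
        ((∑ i ∈ Finset.univ.filter (· ≠ (0 : Fin (n + 1))), (dist (s i) p ^ 2)⁻¹) + N) →
      (∀ j, 0 < dist (s j) p) ∧
      0 ≤ (∑ i ∈ Finset.univ.filter (· ≠ (0 : Fin (n + 1))), (dist (s i) p ^ 2)⁻¹) ∧
      β * ((∑ i ∈ Finset.univ.filter (· ≠ (0 : Fin (n + 1))), (dist (s i) p ^ 2)⁻¹) + N)
        ≤ (dist (s 0) p ^ 2)⁻¹ := by
    intro p hp1 hp2
    have hd : ∀ j, 0 < dist (s j) p := by
      intro j
      rw [dist_pos]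
      intro h
      exact hp1 ⟨j, h⟩
    have hsum : 0 ≤ ∑ i ∈ Finset.univ.filter (· ≠ (0 : Fin (n + 1))), (dist (s i) p ^ 2)⁻¹ :=
      Finset.sum_nonneg fun i _ => by positivity
    have hD : 0 <
        (∑ i ∈ Finset.univ.filter (· ≠ (0 : Fin (n + 1))), (dist (s i) p ^ 2)⁻¹) + N := by
      rcases lt_or_eq_of_le (by linarith :
          (0:ℝ) ≤ (∑ i ∈ Finset.univ.filter (· ≠ (0 : Fin (n + 1))),
            (dist (s i) p ^ 2)⁻¹) + N) with h | h
      · exact h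
      · rw [← h, div_zero] at hp2; linarith
    exact ⟨hd, hsum, (le_div_iff₀ hD).mp hp2⟩
  constructor
  · -- boundedness
    rcases lt_or_eq_of_le hN with hN1 | hN1
    · -- N > 0
      refine (Metric.isBounded_closedBall (x := s 0)
        (r := Real.sqrt ((β * N)⁻¹))).subset ?_
      rintro p (⟨hp1, hp2⟩ | rfl)
      · obtain ⟨hd, hsum, hkey⟩ := key p hp1 hp2
        have h1 : β * N ≤ (dist (s 0) p ^ 2)⁻¹ := by nlinarith
        have h2 : dist (s 0) p ^ 2 ≤ (β * N)⁻¹ := by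
          have := inv_anti₀ (mul_pos hβ0 hN1) h1
          rwa [inv_inv] at this
        rw [Metric.mem_closedBall, dist_comm]
        exact (Real.le_sqrt dist_nonneg (le_of_lt (inv_pos.mpr (mul_pos hβ0 hN1)))).mpr h2
      · simp [Real.sqrt_nonneg]
    · -- N = 0
      subst hN1
      by_cases hn0 : n = 0
      · subst hn0
        have hsub : {p : EuclideanSpace ℝ (Fin 2) | p ∉ Set.range s ∧
            β ≤ (dist (s 0) p ^ 2)⁻¹ /
              ((∑ i ∈ Finset.univ.filter (· ≠ (0 : Fin 1)), (dist (s i) p ^ 2)⁻¹) + 0)}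
            ∪ {s 0} ⊆ {s 0} := by
          rintro p (⟨hp1, hp2⟩ | hp)
          · exfalso
            have he : (Finset.univ.filter (· ≠ (0 : Fin 1))) = ∅ := by decide
            rw [he] at hp2
            simp at hp2
            linarith
          · exact hp
        exact (Set.finite_singleton (s 0)).isBounded.subset hsub
      by_cases hn1 : n = 1
      · -- n = 1 : β > 1
        subst hn1
        have hβ1 : 1 < β := by
          rcases lt_or_eq_of_le hβ with h | h
          · exact h
          · exact absurd ⟨rfl, rfl, h.symm⟩ hnt
        have hsq : 1 < Real.sqrt β := one_lt_sqrt_of_one_lt hβ1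
        refine (Metric.isBounded_closedBall (x := s 0)
          (r := dist (s 1) (s 0) / (Real.sqrt β - 1))).subset ?_
        rintro p (⟨hp1, hp2⟩ | rfl)
        · obtain ⟨hd, hsum, hkey⟩ := key p hp1 hp2
          have hfil : (Finset.univ.filter (· ≠ (0 : Fin 2))) = {1} := by decide
          rw [hfil, Finset.sum_singleton] at hkey
          have hd0 := hd 0
          have hd1 := hd 1
          have e0 : (dist (s 0) p ^ 2)⁻¹ * (dist (s 0) p ^ 2) = 1 :=
            inv_mul_cancel₀ (by positivity)
          have e1 : (dist (s 1) p ^ 2)⁻¹ * (dist (s 1) p ^ 2) = 1 :=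
            inv_mul_cancel₀ (by positivity)
          have h2 : β * dist (s 0) p ^ 2 ≤ dist (s 1) p ^ 2 := by
            have h3 := mul_le_mul_of_nonneg_right hkey
              (show (0:ℝ) ≤ dist (s 0) p ^ 2 * dist (s 1) p ^ 2 by positivity)
            nlinarith
          have htri : dist (s 1) p ≤ dist (s 0) p + dist (s 1) (s 0) := by
            have := dist_triangle (s 1) (s 0) p
            linarith
          have h4 : β * dist (s 0) p ^ 2 ≤ (dist (s 0) p + dist (s 1) (s 0)) ^ 2 := by
            nlinarith [dist_nonneg (x := s 1) (y := p), dist_nonneg (x := s 0) (y := p),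
              dist_nonneg (x := s 1) (y := s 0)]
          have h5 := sqrt_trick hβ1 dist_nonneg dist_nonneg h4
          rw [Metric.mem_closedBall, dist_comm]
          exact h5
        · simp only [Metric.mem_closedBall, dist_self]
          exact div_nonneg dist_nonneg (by linarith)
      · -- n ≥ 2
        have hn2 : 2 ≤ n := by omega
        set j₁ : Fin (n + 1) := ⟨1, by omega⟩ with hj₁
        set j₂ : Fin (n + 1) := ⟨2, by omega⟩ with hj₂
        have hj₁0 : j₁ ≠ 0 := by simp [hj₁, Fin.ext_iff]
        have hj₂0 : j₂ ≠ 0 := by simp [hj₂, Fin.ext_iff]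
        have hj₁₂ : j₁ ≠ j₂ := by simp [hj₁, hj₂, Fin.ext_iff]
        set c : ℝ := max (dist (s j₁) (s 0)) (dist (s j₂) (s 0)) with hc
        have hc0 : 0 ≤ c := le_trans dist_nonneg (le_max_left _ _)
        have h2β : 1 < 2 * β := by linarith
        have hsq : 1 < Real.sqrt (2 * β) := one_lt_sqrt_of_one_lt h2β
        refine (Metric.isBounded_closedBall (x := s 0)
          (r := c / (Real.sqrt (2 * β) - 1))).subset ?_
        rintro p (⟨hp1, hp2⟩ | rfl)
        · obtain ⟨hd, hsum, hkey⟩ := key p hp1 hp2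
          have hd0 := hd 0
          have hd1 := hd j₁
          have hd2 := hd j₂
          have hpair : (dist (s j₁) p ^ 2)⁻¹ + (dist (s j₂) p ^ 2)⁻¹ ≤
              ∑ i ∈ Finset.univ.filter (· ≠ (0 : Fin (n + 1))), (dist (s i) p ^ 2)⁻¹ := by
            have hsub : ({j₁, j₂} : Finset (Fin (n + 1))) ⊆
                Finset.univ.filter (· ≠ (0 : Fin (n + 1))) := by
              intro x hx
              simp only [Finset.mem_insert, Finset.mem_singleton] at hx
              rcases hx with rfl | rfl
              · exact Finset.mem_filter.mpr ⟨Finset.mem_univ _, hj₁0⟩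
              · exact Finset.mem_filter.mpr ⟨Finset.mem_univ _, hj₂0⟩
            have := Finset.sum_le_sum_of_subset_of_nonneg
              (f := fun k => (dist (s k) p ^ 2)⁻¹) hsub (fun x _ _ => by positivity)
            rwa [Finset.sum_pair hj₁₂] at this
          -- distances bounded by d0 + c
          have htri1 : dist (s j₁) p ≤ dist (s 0) p + c := by
            have h := dist_triangle (s j₁) (s 0) p
            have h' := le_max_left (dist (s j₁) (s 0)) (dist (s j₂) (s 0))
            linarith
          have htri2 : dist (s j₂) p ≤ dist (s 0) p + c := by
            have h := dist_triangle (s j₂) (s 0) p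
            have h' := le_max_right (dist (s j₁) (s 0)) (dist (s j₂) (s 0))
            linarith
          have hdc : 0 < dist (s 0) p + c := by linarith
          have hinv1 : ((dist (s 0) p + c) ^ 2)⁻¹ ≤ (dist (s j₁) p ^ 2)⁻¹ := by
            apply inv_anti₀ (by positivity)
            nlinarith [dist_nonneg (x := s j₁) (y := p)]
          have hinv2 : ((dist (s 0) p + c) ^ 2)⁻¹ ≤ (dist (s j₂) p ^ 2)⁻¹ := by
            apply inv_anti₀ (by positivity)
            nlinarith [dist_nonneg (x := s j₂) (y := p)]
          have hkey2 : β * (2 * ((dist (s 0) p + c) ^ 2)⁻¹) ≤ (dist (s 0) p ^ 2)⁻¹ := by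
            have h6 : 2 * ((dist (s 0) p + c) ^ 2)⁻¹ ≤
                (∑ i ∈ Finset.univ.filter (· ≠ (0 : Fin (n + 1))), (dist (s i) p ^ 2)⁻¹) + 0 := by
              linarith
            exact le_trans (mul_le_mul_of_nonneg_left h6 hβ0.le) hkey
          have e0 : (dist (s 0) p ^ 2)⁻¹ * (dist (s 0) p ^ 2) = 1 :=
            inv_mul_cancel₀ (by positivity)
          have e1 : ((dist (s 0) p + c) ^ 2)⁻¹ * ((dist (s 0) p + c) ^ 2) = 1 :=
            inv_mul_cancel₀ (by positivity)
          have h4 : (2 * β) * dist (s 0) p ^ 2 ≤ (dist (s 0) p + c) ^ 2 := by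
            have h3 := mul_le_mul_of_nonneg_right hkey2
              (show (0:ℝ) ≤ dist (s 0) p ^ 2 * (dist (s 0) p + c) ^ 2 by positivity)
            nlinarith
          have h5 := sqrt_trick h2β dist_nonneg hc0 h4
          rw [Metric.mem_closedBall, dist_comm]
          exact h5
        · simp only [Metric.mem_closedBall, dist_self]
          exact div_nonneg hc0 (by linarith)
  · -- strict Voronoi containment
    rintro p (⟨hp1, hp2⟩ | rfl)
    · intro i hi
      obtain ⟨hd, hsum, hkey⟩ := key p hp1 hp2
      have hd0 := hd 0
      have hdi := hd i
      have hfi : (dist (s i) p ^ 2)⁻¹ ≤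
          ∑ k ∈ Finset.univ.filter (· ≠ (0 : Fin (n + 1))), (dist (s k) p ^ 2)⁻¹ :=
        Finset.single_le_sum (f := fun k => (dist (s k) p ^ 2)⁻¹)
          (fun k _ => by positivity) (Finset.mem_filter.mpr ⟨Finset.mem_univ _, hi⟩)
      have hlt : (dist (s i) p ^ 2)⁻¹ < (dist (s 0) p ^ 2)⁻¹ := by
        rcases lt_or_eq_of_le hβ with hβ1 | hβ1
        · -- β > 1
          nlinarith [inv_pos.mpr (show (0:ℝ) < dist (s i) p ^ 2 by positivity)]
        · -- β = 1
          rcases lt_or_eq_of_le hN with hN1 | hN1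
          · nlinarith
          · -- N = 0 : n ≥ 2
            have hn0 : n ≠ 0 := by
              rintro rfl
              exact hi (Fin.fin_one_eq_zero i)
            have hn1 : n ≠ 1 := fun h => hnt ⟨h, hN1.symm, hβ1.symm⟩
            have hcard : 1 < (Finset.univ.filter (· ≠ (0 : Fin (n + 1)))).card := by
              rw [Finset.filter_ne', Finset.card_erase_of_mem (Finset.mem_univ _),
                Finset.card_univ, Fintype.card_fin]
              omega
            obtain ⟨j, hjmem, hji⟩ := Finset.exists_mem_ne hcard i
            have hj0 : j ≠ 0 := (Finset.mem_filter.mp hjmem).2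
            have hdj := hd j
            have hpair : (dist (s i) p ^ 2)⁻¹ + (dist (s j) p ^ 2)⁻¹ ≤
                ∑ k ∈ Finset.univ.filter (· ≠ (0 : Fin (n + 1))), (dist (s k) p ^ 2)⁻¹ := by
              have hsub : ({i, j} : Finset (Fin (n + 1))) ⊆
                  Finset.univ.filter (· ≠ (0 : Fin (n + 1))) := by
                intro x hx
                simp only [Finset.mem_insert, Finset.mem_singleton] at hx
                rcases hx with rfl | rfl
                · exact Finset.mem_filter.mpr ⟨Finset.mem_univ _, hi⟩
                · exact hjmem
              have := Finset.sum_le_sum_of_subset_of_nonneg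
                (f := fun k => (dist (s k) p ^ 2)⁻¹) hsub (fun x _ _ => by positivity)
              rwa [Finset.sum_pair (Ne.symm hji)] at this
            nlinarith [inv_pos.mpr (show (0:ℝ) < dist (s j) p ^ 2 by positivity)]
      have hsq : dist (s 0) p ^ 2 < dist (s i) p ^ 2 := by
        have h0 : (0:ℝ) < dist (s 0) p ^ 2 := by positivity
        have hi' : (0:ℝ) < dist (s i) p ^ 2 := by positivity
        exact (inv_lt_inv₀ hi' h0).mp hlt
      exact lt_of_pow_lt_pow_left₀ 2 dist_nonneg hsq
    · intro i hi
      rw [dist_self]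
      rw [dist_pos]
      exact fun h => hs i hi h
end

section
/- Let s₀, s₁, s₂ ∈ ℝ² with s₁ ≠ s₀ ≠ s₂, and let Z₀ = {p ∈ ℝ² \ {s₀,s₁,s₂} : dist(s₀,p)^{-2} ≥ dist(s₁,p)^{-2} + dist(s₂,p)^{-2}} ∪ {s₀}. Then Z₀ is convex. -/
/-!
Write `Q = d(s₀, ·)²` and `Lᵢ = d(sᵢ, ·)² - d(s₀, ·)²`. Clearing denominators, the reception
inequality becomes `0 ≤ L₁`, `0 ≤ L₂` and `Q² ≤ L₁ L₂`, i.e. `Q ≤ √(L₁ L₂)`, and this description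
also covers `s₀` itself. In a Euclidean space `Q` is convex and the `Lᵢ` are affine, so the
geometric mean `√(L₁ L₂)` is concave, and the set where a convex function lies below a concave
one is convex.
-/

open Set

lemma inv_add_inv_le_inv_iff {a b c : ℝ} (ha : 0 < a) (hb : 0 < b) (hc : 0 < c) :
    b⁻¹ + c⁻¹ ≤ a⁻¹ ↔ 0 ≤ b - a ∧ 0 ≤ c - a ∧ a ^ 2 ≤ (b - a) * (c - a) := by
  rw [inv_add_inv hb.ne' hc.ne', ← one_div a, div_le_div_iff₀ (by positivity) ha]
  constructor
  · intro h
    exact ⟨by nlinarith, by nlinarith, by nlinarith⟩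
  · rintro ⟨-, -, h⟩
    nlinarith

/-- Concavity of the geometric mean `(v, w) ↦ √(v w)`, in square-root-free form. -/
lemma sq_add_le_mul_add_of_sq_le_mul {a b u u' v v' w w' : ℝ} (ha : 0 ≤ a) (hb : 0 ≤ b)
    (hv : 0 ≤ v) (hv' : 0 ≤ v') (hw : 0 ≤ w) (hw' : 0 ≤ w')
    (h : u ^ 2 ≤ v * w) (h' : u' ^ 2 ≤ v' * w') :
    (a * u + b * u') ^ 2 ≤ (a * v + b * v') * (a * w + b * w') := by
  have hcross : 2 * (u * u') ≤ v * w' + v' * w := by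
    refine two_mul_le_add_of_sq_le_mul (mul_nonneg hv hw') (mul_nonneg hv' hw) ?_
    calc (u * u') ^ 2 = u ^ 2 * u' ^ 2 := by ring
      _ ≤ (v * w) * (v' * w') := mul_le_mul h h' (sq_nonneg _) (by positivity)
      _ = (v * w') * (v' * w) := by ring
  nlinarith [mul_le_mul_of_nonneg_left h (mul_nonneg ha ha),
    mul_le_mul_of_nonneg_left h' (mul_nonneg hb hb),
    mul_le_mul_of_nonneg_left hcross (mul_nonneg ha hb)]

lemma ConvexOn.convex_sep_sq_le_mul {E : Type*} [AddCommGroup E] [Module ℝ E] {s : Set E}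
    {f g h : E → ℝ} (hf : ConvexOn ℝ s f) (hf₀ : ∀ x ∈ s, 0 ≤ f x) (hg : ConcaveOn ℝ s g)
    (hh : ConcaveOn ℝ s h) :
    Convex ℝ {x ∈ s | 0 ≤ g x ∧ 0 ≤ h x ∧ f x ^ 2 ≤ g x * h x} := by
  rintro x ⟨hxs, hgx, hhx, hx⟩ y ⟨hys, hgy, hhy, hy⟩ a b ha hb hab
  have hzs : a • x + b • y ∈ s := hf.1 hxs hys ha hb hab
  have hfz := hf.2 hxs hys ha hb hab
  have hgz := hg.2 hxs hys ha hb hab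
  have hhz := hh.2 hxs hys ha hb hab
  simp only [smul_eq_mul] at hfz hgz hhz
  have hgxy : 0 ≤ a * g x + b * g y := by positivity
  have hhxy : 0 ≤ a * h x + b * h y := by positivity
  refine ⟨hzs, hgxy.trans hgz, hhxy.trans hhz, ?_⟩
  calc f (a • x + b • y) ^ 2 ≤ (a * f x + b * f y) ^ 2 := by
        gcongr
        exact hf₀ _ hzs
    _ ≤ (a * g x + b * g y) * (a * h x + b * h y) :=
        sq_add_le_mul_add_of_sq_le_mul ha hb hgx hgy hhx hhy hx hy
    _ ≤ g (a • x + b • y) * h (a • x + b • y) := mul_le_mul hgz hhz hhxy (hgxy.trans hgz)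

section InnerProductSpace

variable {E : Type*} [NormedAddCommGroup E] [InnerProductSpace ℝ E]

lemma convexOn_univ_dist_sq (s : E) : ConvexOn ℝ univ fun x => dist s x ^ 2 := by
  simp_rw [dist_comm s]
  exact (convexOn_univ_dist s).pow (fun _ _ => dist_nonneg) 2

lemma dist_sq_sub_dist_sq (s t x : E) :
    dist s x ^ 2 - dist t x ^ 2 = ‖s‖ ^ 2 - ‖t‖ ^ 2 - 2 * inner ℝ (s - t) x := by
  simp only [dist_eq_norm, norm_sub_sq_real, inner_sub_left]
  ring

lemma concaveOn_univ_dist_sq_sub_dist_sq (s t : E) :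
    ConcaveOn ℝ univ fun x => dist s x ^ 2 - dist t x ^ 2 := by
  have h : (fun x => dist s x ^ 2 - dist t x ^ 2) =
      (fun _ => ‖s‖ ^ 2 - ‖t‖ ^ 2) - ⇑((2 : ℝ) • innerₛₗ ℝ (s - t)) := by
    ext x
    simp [dist_sq_sub_dist_sq, inner_sub_left]
  rw [h]
  exact (concaveOn_const _ convex_univ).sub (LinearMap.convexOn _ convex_univ)

end InnerProductSpace

lemma reception_zone_eq {X : Type*} [MetricSpace X] (s₀ s₁ s₂ : X) :
    {p | p ∉ ({s₀, s₁, s₂} : Set X) ∧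
        (dist s₁ p ^ 2)⁻¹ + (dist s₂ p ^ 2)⁻¹ ≤ (dist s₀ p ^ 2)⁻¹} ∪ {s₀} =
      {p | 0 ≤ dist s₁ p ^ 2 - dist s₀ p ^ 2 ∧ 0 ≤ dist s₂ p ^ 2 - dist s₀ p ^ 2 ∧
        (dist s₀ p ^ 2) ^ 2 ≤ (dist s₁ p ^ 2 - dist s₀ p ^ 2) * (dist s₂ p ^ 2 - dist s₀ p ^ 2)} := by
  ext p
  by_cases hp₀ : p = s₀
  · subst hp₀
    simp only [mem_union, mem_singleton_iff, or_true, dist_self, mem_ofPred_eq, true_iff]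
    norm_num
    positivity
  have hd₀ : 0 < dist s₀ p ^ 2 := pow_pos (dist_pos.2 (Ne.symm hp₀)) 2
  by_cases hp₁ : p = s₁
  · subst hp₁
    refine iff_of_false (by simp [hp₀]) fun ⟨h, _⟩ => ?_
    simp only [dist_self] at h
    linarith
  by_cases hp₂ : p = s₂
  · subst hp₂
    refine iff_of_false (by simp [hp₀]) fun ⟨_, h, _⟩ => ?_
    simp only [dist_self] at h
    linarith
  simp only [mem_union, mem_ofPred_eq, mem_insert_iff, mem_singleton_iff, hp₀, hp₁, hp₂, or_self,
    not_false_eq_true, true_and, or_false]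
  exact inv_add_inv_le_inv_iff hd₀ (pow_pos (dist_pos.2 (Ne.symm hp₁)) 2)
    (pow_pos (dist_pos.2 (Ne.symm hp₂)) 2)

theorem stmt8_general (s₀ s₁ s₂ : EuclideanSpace ℝ (Fin 2))
    (Z₀ : Set (EuclideanSpace ℝ (Fin 2)))
    (hZ : Z₀ = {p | p ∉ ({s₀, s₁, s₂} : Set (EuclideanSpace ℝ (Fin 2))) ∧
        (dist s₁ p ^ 2)⁻¹ + (dist s₂ p ^ 2)⁻¹ ≤ (dist s₀ p ^ 2)⁻¹} ∪ {s₀}) :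
    Convex ℝ Z₀ := by
  rw [hZ, reception_zone_eq, ← sep_univ]
  exact (convexOn_univ_dist_sq s₀).convex_sep_sq_le_mul (fun _ _ => sq_nonneg _)
    (concaveOn_univ_dist_sq_sub_dist_sq s₁ s₀) (concaveOn_univ_dist_sq_sub_dist_sq s₂ s₀)

theorem stmt8 (s₀ s₁ s₂ : EuclideanSpace ℝ (Fin 2)) (h₁ : s₁ ≠ s₀) (h₂ : s₂ ≠ s₀)
    (Z₀ : Set (EuclideanSpace ℝ (Fin 2)))
    (hZ : Z₀ = {p | p ∉ ({s₀, s₁, s₂} : Set (EuclideanSpace ℝ (Fin 2))) ∧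
        (dist s₁ p ^ 2)⁻¹ + (dist s₂ p ^ 2)⁻¹ ≤ (dist s₀ p ^ 2)⁻¹} ∪ {s₀}) :
    Convex ℝ Z₀ :=
  stmt8_general s₀ s₁ s₂ Z₀ hZ
end

section
/- Let p₁, p₂ ∈ ℝ² and ρ₁ ≥ ρ₂ > 0 be such that there exists a point s₀ with dist(s₀, pᵢ) ≤ ρᵢ for i = 1,2 where the ρᵢ come from ρᵢ = 1/√(E({s₁,s₂}, pᵢ)) for stations s₁, s₂ with E(s₀,pᵢ) ≥ E({s₁,s₂},pᵢ). Then the boundary circles of the balls B(p₁,ρ₁) and B(p₂,ρ₂) intersect; i.e., |ρ₁ − ρ₂| ≤ dist(p₁,p₂) ≤ ρ₁ + ρ₂. -/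
/-!
The radius `ρ(p) = E(S, p)^{-1/2}` is 1-Lipschitz in `p` away from the stations. Write
`uᵢ = dist(sᵢ, q)`, `vᵢ = dist(sᵢ, p)`, `d = dist(p, q)` and `R = ρ(q)`. Since `R ≤ uᵢ` and
`vᵢ ≤ uᵢ + d`, we get `R / (uᵢ (R + d)) ≤ 1 / (uᵢ + d) ≤ 1 / vᵢ`; squaring and summing gives
`E(S, p) ≥ R² E(S, q) / (R + d)² = (R + d)⁻²`, i.e. `ρ(p) ≤ R + d`. This is the first inequality.
The second one is the triangle inequality through `s₀`, which lies in both balls.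
-/

open Real

lemma inv_sqrt_le_iff {e u : ℝ} (he : 0 < e) (hu : 0 < u) : (√e)⁻¹ ≤ u ↔ (u ^ 2)⁻¹ ≤ e := by
  rw [inv_le_comm₀ (sqrt_pos.2 he) hu, le_sqrt (by positivity) he.le, inv_pow]

lemma le_inv_sqrt_of_le_inv_sq {e x : ℝ} (he : 0 < e) (hx : 0 ≤ x) (hex : e ≤ (x ^ 2)⁻¹) :
    x ≤ (√e)⁻¹ := by
  rcases hx.eq_or_lt with rfl | hx
  · positivity
  · rwa [le_inv_comm₀ hx (sqrt_pos.2 he), sqrt_le_left (by positivity), inv_pow]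

lemma div_mul_add_le_inv {R u d v : ℝ} (hR : 0 < R) (hRu : R ≤ u) (hd : 0 ≤ d) (hv : 0 < v)
    (hvu : v ≤ u + d) : R / (u * (R + d)) ≤ v⁻¹ := by
  rw [div_le_iff₀ (by nlinarith), ← div_eq_inv_mul, le_div_iff₀ hv]
  nlinarith

section Energy

variable {X ι : Type*} [Fintype ι]

/-- The energy `E(S, p)` received at `p` from the stations `S = {s i}`. -/
noncomputable def receivedEnergy [PseudoMetricSpace X] (s : ι → X) (p : X) : ℝ :=
  ∑ i, (dist (s i) p ^ 2)⁻¹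

/-- The paper's `ρ`: the ball `B(p, ρ)` is the set of locations `x` with `E(x, p) ≥ E(S, p)`. -/
noncomputable def energyRadius [PseudoMetricSpace X] (s : ι → X) (p : X) : ℝ :=
  (√(receivedEnergy s p))⁻¹

lemma receivedEnergy_pos [MetricSpace X] [Nonempty ι] {s : ι → X} {p : X}
    (hp : ∀ i, s i ≠ p) : 0 < receivedEnergy s p :=
  Finset.sum_pos (fun i _ => by have := dist_pos.2 (hp i); positivity) Finset.univ_nonempty

lemma dist_le_energyRadius [PseudoMetricSpace X] {s : ι → X} {p x : X}
    (he : 0 < receivedEnergy s p) (hx : receivedEnergy s p ≤ (dist x p ^ 2)⁻¹) :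
    dist x p ≤ energyRadius s p :=
  le_inv_sqrt_of_le_inv_sq he dist_nonneg hx

lemma energyRadius_le_dist [MetricSpace X] [Nonempty ι] {s : ι → X} {p : X}
    (hp : ∀ i, s i ≠ p) (i : ι) : energyRadius s p ≤ dist (s i) p :=
  (inv_sqrt_le_iff (receivedEnergy_pos hp) (dist_pos.2 (hp i))).2 <|
    Finset.single_le_sum (f := fun j => (dist (s j) p ^ 2)⁻¹) (fun j _ => by positivity)
      (Finset.mem_univ i)

lemma energyRadius_le_add_dist [MetricSpace X] [Nonempty ι] {s : ι → X} {p q : X}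
    (hp : ∀ i, s i ≠ p) (hq : ∀ i, s i ≠ q) :
    energyRadius s p ≤ energyRadius s q + dist p q := by
  set R := energyRadius s q with hR_def
  set d := dist p q
  have he := receivedEnergy_pos hq
  have hR : 0 < R := inv_pos.2 (sqrt_pos.2 he)
  have hRe : R ^ 2 * receivedEnergy s q = 1 := by
    rw [hR_def, energyRadius, inv_pow, sq_sqrt he.le, inv_mul_cancel₀ he.ne']
  have hterm (i : ι) : R / (dist (s i) q * (R + d)) ≤ (dist (s i) p)⁻¹ :=
    div_mul_add_le_inv hR (energyRadius_le_dist hq i) dist_nonneg (dist_pos.2 (hp i))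
      (dist_triangle_right _ _ _)
  rw [energyRadius, inv_sqrt_le_iff (receivedEnergy_pos hp) (by positivity)]
  calc ((R + d) ^ 2)⁻¹ = R ^ 2 / (R + d) ^ 2 * receivedEnergy s q := by
        rw [div_mul_eq_mul_div, hRe, one_div]
    _ = ∑ i, (R / (dist (s i) q * (R + d))) ^ 2 := by
        rw [receivedEnergy, Finset.mul_sum]
        refine Finset.sum_congr rfl fun i _ => ?_
        rw [← div_eq_mul_inv, div_pow, mul_pow, mul_comm (_ ^ 2) ((R + d) ^ 2), div_div]
    _ ≤ receivedEnergy s p := Finset.sum_le_sum fun i _ => by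
        rw [← inv_pow]
        exact pow_le_pow_left₀ (by positivity) (hterm i) 2

lemma abs_energyRadius_sub_le_dist [MetricSpace X] [Nonempty ι] {s : ι → X} {p q : X}
    (hp : ∀ i, s i ≠ p) (hq : ∀ i, s i ≠ q) :
    |energyRadius s p - energyRadius s q| ≤ dist p q := by
  rw [abs_sub_le_iff, sub_le_iff_le_add', sub_le_iff_le_add']
  exact ⟨energyRadius_le_add_dist hp hq, dist_comm q p ▸ energyRadius_le_add_dist hq hp⟩

end Energy

theorem stmt10_general (p₁ p₂ s₀ s₁ s₂ : EuclideanSpace ℝ (Fin 2))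
    (E : EuclideanSpace ℝ (Fin 2) → EuclideanSpace ℝ (Fin 2) → ℝ)
    (hE : ∀ s p, E s p = (dist s p ^ 2)⁻¹)
    (hne : s₁ ≠ p₁ ∧ s₁ ≠ p₂ ∧ s₂ ≠ p₁ ∧ s₂ ≠ p₂)
    (ρ₁ ρ₂ : ℝ)
    (hρ₁ : ρ₁ = (Real.sqrt (E s₁ p₁ + E s₂ p₁))⁻¹)
    (hρ₂ : ρ₂ = (Real.sqrt (E s₁ p₂ + E s₂ p₂))⁻¹)
    (h1 : E s₁ p₁ + E s₂ p₁ ≤ E s₀ p₁) (h2 : E s₁ p₂ + E s₂ p₂ ≤ E s₀ p₂) :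
    |ρ₁ - ρ₂| ≤ dist p₁ p₂ ∧ dist p₁ p₂ ≤ ρ₁ + ρ₂ := by
  obtain ⟨h11, h12, h21, h22⟩ := hne
  set s : Fin 2 → EuclideanSpace ℝ (Fin 2) := ![s₁, s₂]
  have hE_s (p) : receivedEnergy s p = E s₁ p + E s₂ p := by
    simp [receivedEnergy, s, Fin.sum_univ_two, hE]
  have hs₁ : ∀ i, s i ≠ p₁ := Fin.forall_fin_two.2 ⟨h11, h21⟩
  have hs₂ : ∀ i, s i ≠ p₂ := Fin.forall_fin_two.2 ⟨h12, h22⟩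
  rw [← hE_s] at hρ₁ hρ₂ h1 h2
  rw [hE] at h1 h2
  subst hρ₁ hρ₂
  refine ⟨abs_energyRadius_sub_le_dist hs₁ hs₂, ?_⟩
  calc dist p₁ p₂ ≤ dist s₀ p₁ + dist s₀ p₂ := dist_triangle_left _ _ _
    _ ≤ energyRadius s p₁ + energyRadius s p₂ :=
        add_le_add (dist_le_energyRadius (receivedEnergy_pos hs₁) h1)
          (dist_le_energyRadius (receivedEnergy_pos hs₂) h2)

theorem stmt10 (p₁ p₂ s₀ s₁ s₂ : EuclideanSpace ℝ (Fin 2)) (hp : p₁ ≠ p₂)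
    (E : EuclideanSpace ℝ (Fin 2) → EuclideanSpace ℝ (Fin 2) → ℝ)
    (hE : ∀ s p, E s p = (dist s p ^ 2)⁻¹)
    (hne : s₁ ≠ p₁ ∧ s₁ ≠ p₂ ∧ s₂ ≠ p₁ ∧ s₂ ≠ p₂)
    (ρ₁ ρ₂ : ℝ)
    (hρ₁ : ρ₁ = (Real.sqrt (E s₁ p₁ + E s₂ p₁))⁻¹)
    (hρ₂ : ρ₂ = (Real.sqrt (E s₁ p₂ + E s₂ p₂))⁻¹)
    (hρ : ρ₂ ≤ ρ₁)
    (h1 : E s₁ p₁ + E s₂ p₁ ≤ E s₀ p₁) (h2 : E s₁ p₂ + E s₂ p₂ ≤ E s₀ p₂) :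
    |ρ₁ - ρ₂| ≤ dist p₁ p₂ ∧ dist p₁ p₂ ≤ ρ₁ + ρ₂ :=
  stmt10_general p₁ p₂ s₀ s₁ s₂ E hE hne ρ₁ ρ₂ hρ₁ hρ₂ h1 h2
end

section
/- Let s₀,…,s_{n-1} ∈ ℝ², N ≥ 0, β ≥ 1. The reception zone Z₀ = {p ∈ ℝ² \ S : dist(s₀,p)^{-2}/(Σ_{i≥1} dist(sᵢ,p)^{-2} + N) ≥ β} ∪ {s₀} is convex. -/
/-!
With path-loss exponent 2, every squared distance `f` satisfies
`f (a • p + b • q) = a f p + b f q - a b ‖p - q‖²` with the same correction term for all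
stations, so each `fᵢ - f₀` is affine. For `β ≥ 1` the zone of `s₀` lies in its Voronoi
cell, which is thus convex, and on the cell the inverse SINR `h = f₀ (∑ 1 / fᵢ + N)` is
bounded at `a • p + b • q` by the average of `h p` and `h q` with weights `a f₀ p` and
`b f₀ q`: termwise this follows from `f₀ ≤ fᵢ` at both endpoints and Cauchy–Schwarz.
So `h` is quasiconvex on the cell, and the zone is its sublevel set at `β⁻¹`.
-/

open Finset

variable {E : Type*} [NormedAddCommGroup E] [InnerProductSpace ℝ E]

theorem dist_sq_smul_add_smul (w p q : E) {a b : ℝ} (hab : a + b = 1) :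
    dist w (a • p + b • q) ^ 2 =
      a * dist w p ^ 2 + b * dist w q ^ 2 - a * b * dist p q ^ 2 := by
  have hw : w - (a • p + b • q) = a • (w - p) + b • (w - q) := by
    rw [smul_sub, smul_sub, sub_add_sub_comm, ← add_smul, hab, one_smul]
  rw [dist_eq_norm, dist_eq_norm, dist_eq_norm, dist_eq_norm, hw,
    show p - q = (w - q) - (w - p) by abel, norm_add_sq_real, norm_sub_sq_real (w - q), norm_smul,
    norm_smul, real_inner_smul_left, real_inner_smul_right, real_inner_comm (w - p)]
  simp only [Real.norm_eq_abs, mul_pow, sq_abs]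
  obtain rfl := eq_sub_of_add_eq hab
  ring

theorem weighted_sub_div_sub_le {a b u v x y t : ℝ} (ha : 0 ≤ a) (hb : 0 ≤ b)
    (hu : 0 ≤ u) (hux : u ≤ x) (hv : 0 ≤ v) (hvy : v ≤ y) (ht : 0 ≤ t)
    (htW : t < a * u + b * v) :
    (a * u + b * v - t) / (a * x + b * y - t) ≤
      (a * u * (u / x) + b * v * (v / y)) / (a * u + b * v) := by
  have hW : 0 < a * u + b * v := ht.trans_lt htW
  have hWV : a * u + b * v ≤ a * x + b * y := by gcongr
  have hx : 0 ≤ x := hu.trans hux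
  have hy : 0 ≤ y := hv.trans hvy
  obtain ⟨r, rfl⟩ : ∃ r, u = r * x :=
    ⟨u / x, (div_mul_cancel_of_imp fun hx0 => le_antisymm (hx0 ▸ hux) hu).symm⟩
  obtain ⟨ρ, rfl⟩ : ∃ ρ, v = ρ * y :=
    ⟨v / y, (div_mul_cancel_of_imp fun hy0 => le_antisymm (hy0 ▸ hvy) hv).symm⟩
  have hsq (c z w : ℝ) : c * (w * z) * (w * z / z) = c * z * w ^ 2 := by
    rcases eq_or_ne z 0 with rfl | hz
    · simp
    · field_simp
  calc (a * (r * x) + b * (ρ * y) - t) / (a * x + b * y - t)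
      ≤ (a * (r * x) + b * (ρ * y)) / (a * x + b * y) := by
        rw [div_le_div_iff₀ (by linarith) (by linarith)]
        nlinarith
    _ ≤ _ := by
        -- Cauchy–Schwarz for the weights `a x`, `b y`
        rw [div_le_div_iff₀ (by linarith) hW, hsq, hsq]
        nlinarith [mul_nonneg (mul_nonneg (mul_nonneg ha hb) (mul_nonneg hx hy))
          (sq_nonneg (r - ρ))]

theorem sub_mul_le_weighted {a b u v t N : ℝ} (ha : 0 ≤ a) (hb : 0 ≤ b) (hab : a + b = 1)
    (ht : 0 ≤ t) (hN : 0 ≤ N) (hW : 0 < a * u + b * v) :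
    (a * u + b * v - t) * N ≤ (a * u * (u * N) + b * v * (v * N)) / (a * u + b * v) := by
  rw [le_div_iff₀ hW]
  have hjensen : (a * u + b * v) ^ 2 + a * b * (u - v) ^ 2 = a * u ^ 2 + b * v ^ 2 := by
    obtain rfl := eq_sub_of_add_eq hab; ring
  nlinarith [mul_nonneg (mul_nonneg (mul_nonneg ha hb) (sq_nonneg (u - v))) hN,
    mul_nonneg (mul_nonneg ht hW.le) hN]

section Network

variable {F ι : Type*} [MetricSpace F] (s : ι → F) (i₀ : ι) (N : ℝ)

def voronoiCell : Set F :=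
  {p | ∀ i, dist (s i₀) p ≤ dist (s i) p}

variable [Fintype ι] [DecidableEq ι]

noncomputable def interference (p : F) : ℝ :=
  (∑ i ∈ univ.filter (· ≠ i₀), (dist (s i) p ^ 2)⁻¹) + N

noncomputable def sinr (p : F) : ℝ :=
  (dist (s i₀) p ^ 2)⁻¹ / interference s i₀ N p

-- `1 / sinr` away from the stations; at `s i₀` it is `0`.
noncomputable def invSinr (p : F) : ℝ :=
  dist (s i₀) p ^ 2 * interference s i₀ N p

def receptionZone (β : ℝ) : Set F :=
  {p | p ∉ Set.range s ∧ β ≤ sinr s i₀ N p} ∪ {s i₀}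

variable {s i₀ N}

theorem interference_nonneg (hN : 0 ≤ N) (p : F) : 0 ≤ interference s i₀ N p := by
  unfold interference; positivity

theorem invSinr_nonneg (hN : 0 ≤ N) (p : F) : 0 ≤ invSinr s i₀ N p :=
  mul_nonneg (sq_nonneg _) (interference_nonneg hN p)

@[simp]
theorem invSinr_self : invSinr s i₀ N (s i₀) = 0 := by
  simp [invSinr]

theorem dist_sq_div_le_invSinr (hN : 0 ≤ N) {i : ι} (hi : i ≠ i₀) (p : F) :
    dist (s i₀) p ^ 2 / dist (s i) p ^ 2 ≤ invSinr s i₀ N p := by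
  rw [div_eq_mul_inv, invSinr, interference]
  gcongr
  refine le_add_of_le_of_nonneg ?_ hN
  exact single_le_sum (f := fun j => (dist (s j) p ^ 2)⁻¹) (fun j _ => by positivity)
    (by simpa using hi)

theorem interference_pos (hN : 0 ≤ N) (hT : (univ.filter (· ≠ i₀)).Nonempty ∨ 0 < N)
    {p : F} (hp : p ∉ Set.range s) : 0 < interference s i₀ N p := by
  rcases hT with hT | hNpos
  · have hd (i : ι) : 0 < dist (s i) p := dist_pos.2 fun h => hp ⟨i, h⟩
    have := sum_pos (f := fun i => (dist (s i) p ^ 2)⁻¹)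
      (fun i _ => by have := hd i; positivity) hT
    exact add_pos_of_pos_of_nonneg this hN
  · exact add_pos_of_nonneg_of_pos (by positivity) hNpos

theorem le_sinr_iff {β : ℝ} (hβ : 0 < β) {p : F} (hp : s i₀ ≠ p)
    (hI : 0 < interference s i₀ N p) :
    β ≤ sinr s i₀ N p ↔ invSinr s i₀ N p ≤ β⁻¹ := by
  have := dist_pos.2 hp
  rw [sinr, invSinr, le_div_iff₀ hI, le_inv_comm₀ (by positivity) (by positivity), mul_inv,
    ← div_eq_mul_inv, le_div_iff₀ (by positivity), mul_comm]

theorem mem_voronoiCell_of_invSinr_le_one (hN : 0 ≤ N) {p : F} (hp : p ∉ Set.range s)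
    (h : invSinr s i₀ N p ≤ 1) : p ∈ voronoiCell s i₀ := by
  intro i
  rcases eq_or_ne i i₀ with rfl | hi
  · exact le_rfl
  have hd : 0 < dist (s i) p := dist_pos.2 fun h => hp ⟨i, h⟩
  rw [← pow_le_pow_iff_left₀ dist_nonneg dist_nonneg two_ne_zero,
    ← div_le_one (by positivity)]
  exact (dist_sq_div_le_invSinr hN hi p).trans h

theorem receptionZone_eq_sublevel (hN : 0 ≤ N) {β : ℝ} (hβ : 1 ≤ β)
    (hT : (univ.filter (· ≠ i₀)).Nonempty ∨ 0 < N) :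
    receptionZone s i₀ N β = {p ∈ voronoiCell s i₀ | invSinr s i₀ N p ≤ β⁻¹} := by
  have hβ0 : 0 < β := one_pos.trans_le hβ
  ext p
  rcases eq_or_ne p (s i₀) with rfl | hpi₀
  · simp [receptionZone, voronoiCell, invSinr_self, hβ0.le]
  by_cases hp : p ∈ Set.range s
  · obtain ⟨j, rfl⟩ := hp
    simp only [receptionZone, Set.mem_union, Set.mem_ofPred_eq, Set.mem_range_self,
      not_true_eq_false, false_and, Set.mem_singleton_iff, hpi₀, or_false, false_iff]
    exact fun ⟨hcell, _⟩ => hpi₀ (dist_le_zero.1 ((hcell j).trans_eq (dist_self _))).symm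
  · simp only [receptionZone, Set.mem_union, Set.mem_ofPred_eq, Set.mem_singleton_iff, hpi₀,
      or_false, hp, not_false_eq_true, true_and,
      le_sinr_iff hβ0 (Ne.symm hpi₀) (interference_pos hN hT hp)]
    exact ⟨fun h => ⟨mem_voronoiCell_of_invSinr_le_one hN hp
      (h.trans (inv_le_one_of_one_le₀ hβ)), h⟩, And.right⟩

-- With a single station and no noise the interference vanishes and `sinr` is the junk `x / 0 = 0`.
theorem receptionZone_eq_singleton (hN : 0 ≤ N) {β : ℝ} (hβ : 0 < β)
    (hT : ¬((univ.filter (· ≠ i₀)).Nonempty ∨ 0 < N)) :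
    receptionZone s i₀ N β = {s i₀} := by
  rw [not_or, not_nonempty_iff_eq_empty, not_lt] at hT
  obtain rfl : N = 0 := le_antisymm hT.2 hN
  simp [receptionZone, sinr, interference, hT.1, hβ.not_ge]

end Network

section Convexity

variable {ι : Type*} (s : ι → E) (i₀ : ι)

theorem convex_voronoiCell : Convex ℝ (voronoiCell s i₀) := by
  intro p hp q hq a b ha hb hab i
  rw [← pow_le_pow_iff_left₀ dist_nonneg dist_nonneg two_ne_zero,
    dist_sq_smul_add_smul _ _ _ hab, dist_sq_smul_add_smul _ _ _ hab]
  gcongr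
  exacts [hp i, hq i]

variable [Fintype ι] [DecidableEq ι] {s i₀} {N : ℝ}

theorem invSinr_smul_add_smul_le (hN : 0 ≤ N) {p q : E} (hp : p ∈ voronoiCell s i₀)
    (hq : q ∈ voronoiCell s i₀) {a b : ℝ} (ha : 0 ≤ a) (hb : 0 ≤ b) (hab : a + b = 1)
    (hz : a • p + b • q ≠ s i₀) :
    invSinr s i₀ N (a • p + b • q) ≤
      (a * dist (s i₀) p ^ 2 * invSinr s i₀ N p +
          b * dist (s i₀) q ^ 2 * invSinr s i₀ N q) /
        (a * dist (s i₀) p ^ 2 + b * dist (s i₀) q ^ 2) := by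
  set u := dist (s i₀) p ^ 2
  set v := dist (s i₀) q ^ 2
  set t := a * b * dist p q ^ 2
  have ht : 0 ≤ t := by positivity
  have hf (i : ι) : dist (s i) (a • p + b • q) ^ 2 =
      a * dist (s i) p ^ 2 + b * dist (s i) q ^ 2 - t :=
    dist_sq_smul_add_smul _ _ _ hab
  have htW : t < a * u + b * v := by
    have := dist_pos.2 (Ne.symm hz)
    nlinarith [hf i₀]
  have hcell {r : E} (hr : r ∈ voronoiCell s i₀) (i : ι) :
      dist (s i₀) r ^ 2 ≤ dist (s i) r ^ 2 :=
    pow_le_pow_left₀ dist_nonneg (hr i) 2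
  have hterm (i : ι) : (a * u + b * v - t) * (dist (s i) (a • p + b • q) ^ 2)⁻¹ ≤
      (a * u * (u * (dist (s i) p ^ 2)⁻¹) + b * v * (v * (dist (s i) q ^ 2)⁻¹)) /
        (a * u + b * v) := by
    rw [hf i]
    simpa only [div_eq_mul_inv] using weighted_sub_div_sub_le ha hb (sq_nonneg _) (hcell hp i)
      (sq_nonneg _) (hcell hq i) ht htW
  calc invSinr s i₀ N (a • p + b • q)
      = ∑ i ∈ univ.filter (· ≠ i₀),
            (a * u + b * v - t) * (dist (s i) (a • p + b • q) ^ 2)⁻¹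
          + (a * u + b * v - t) * N := by
        rw [invSinr, hf i₀, interference, mul_add, mul_sum]
    _ ≤ ∑ i ∈ univ.filter (· ≠ i₀),
          (a * u * (u * (dist (s i) p ^ 2)⁻¹) + b * v * (v * (dist (s i) q ^ 2)⁻¹)) /
            (a * u + b * v)
          + (a * u * (u * N) + b * v * (v * N)) / (a * u + b * v) := by
        gcongr with i
        · exact hterm i
        · exact sub_mul_le_weighted ha hb hab ht hN (ht.trans_lt htW)
    _ = _ := by
        simp only [invSinr, interference, mul_add, mul_sum, add_div, sum_div, sum_add_distrib]
        ring

theorem quasiconvexOn_invSinr (hN : 0 ≤ N) :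
    QuasiconvexOn ℝ (voronoiCell s i₀) (invSinr s i₀ N) := by
  refine quasiconvexOn_iff_le_max.2
    ⟨convex_voronoiCell s i₀, fun p hp q hq a b ha hb hab => ?_⟩
  rcases eq_or_ne (a • p + b • q) (s i₀) with hz | hz
  · rw [hz, invSinr_self]
    exact le_max_of_le_left (invSinr_nonneg hN p)
  refine (invSinr_smul_add_smul_le hN hp hq ha hb hab hz).trans ?_
  rcases (by positivity : 0 ≤ a * dist (s i₀) p ^ 2 + b * dist (s i₀) q ^ 2).eq_or_lt
    with hW | hW
  · rw [← hW, div_zero]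
    exact le_max_of_le_left (invSinr_nonneg hN p)
  rw [div_le_iff₀ hW]
  nlinarith [le_max_left (invSinr s i₀ N p) (invSinr s i₀ N q),
    le_max_right (invSinr s i₀ N p) (invSinr s i₀ N q),
    mul_nonneg ha (sq_nonneg (dist (s i₀) p)), mul_nonneg hb (sq_nonneg (dist (s i₀) q))]

theorem convex_receptionZone (hN : 0 ≤ N) {β : ℝ} (hβ : 1 ≤ β) :
    Convex ℝ (receptionZone s i₀ N β) := by
  by_cases hT : (univ.filter (· ≠ i₀)).Nonempty ∨ 0 < N
  · rw [receptionZone_eq_sublevel hN hβ hT]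
    exact quasiconvexOn_invSinr hN β⁻¹
  · rw [receptionZone_eq_singleton hN (one_pos.trans_le hβ) hT]
    exact convex_singleton _

end Convexity

theorem stmt12 (n : ℕ) (s : Fin (n + 1) → EuclideanSpace ℝ (Fin 2)) (N β : ℝ)
    (hN : 0 ≤ N) (hβ : 1 ≤ β)
    (Z₀ : Set (EuclideanSpace ℝ (Fin 2)))
    (hZ : Z₀ = {p | p ∉ Set.range s ∧
        β ≤ (dist (s 0) p ^ 2)⁻¹ /
          ((∑ i ∈ Finset.univ.filter (· ≠ (0 : Fin (n + 1))), (dist (s i) p ^ 2)⁻¹) + N)}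
      ∪ {s 0}) :
    Convex ℝ Z₀ := by
  subst hZ
  exact convex_receptionZone hN hβ
end

section
/- Let p₁, p₂ ∈ ℝ², N > 0, and suppose s₀ satisfies dist(s₀, pᵢ) < 1/√N for i = 1,2. Then dist(p₁,p₂) < 2/√N, the circles of radius 1/√N around p₁ and p₂ intersect at some point sₙ, and every point q on the segment p₁p₂ satisfies dist(sₙ, q) ≤ 1/√N. -/
open scoped RealInnerProductSpace

lemma aux_norm {E : Type*} [NormedAddCommGroup E] [InnerProductSpace ℝ E]
    (v w : E) (hvw : ⟪v, w⟫ = 0) (a b : ℝ) :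
    ‖a • v + b • w‖ ^ 2 = a ^ 2 * ‖v‖ ^ 2 + b ^ 2 * ‖w‖ ^ 2 := by
  rw [norm_add_sq_real, norm_smul, norm_smul, inner_smul_left, inner_smul_right, hvw]
  simp [mul_pow, abs_mul_abs_self]

theorem stmt13 (p₁ p₂ s₀ : EuclideanSpace ℝ (Fin 2)) (N : ℝ) (hN : 0 < N)
    (h1 : dist s₀ p₁ < 1 / Real.sqrt N) (h2 : dist s₀ p₂ < 1 / Real.sqrt N) :
    dist p₁ p₂ < 2 / Real.sqrt N ∧
    ∃ sn : EuclideanSpace ℝ (Fin 2),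
      dist sn p₁ = 1 / Real.sqrt N ∧ dist sn p₂ = 1 / Real.sqrt N ∧
      ∀ q ∈ segment ℝ p₁ p₂, dist sn q ≤ 1 / Real.sqrt N := by
  set r : ℝ := 1 / Real.sqrt N with hr
  have hrpos : 0 < r := by positivity
  have hd2 : dist p₁ p₂ < 2 / Real.sqrt N := by
    calc dist p₁ p₂ ≤ dist p₁ s₀ + dist s₀ p₂ := dist_triangle _ _ _
    _ < 1 / Real.sqrt N + 1 / Real.sqrt N := by
        rw [dist_comm p₁ s₀]; exact add_lt_add h1 h2
    _ = 2 / Real.sqrt N := by ring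
  refine ⟨hd2, ?_⟩
  -- produce sn with dist sn p₁ = r, dist sn p₂ = r
  suffices h : ∃ sn : EuclideanSpace ℝ (Fin 2), dist sn p₁ = r ∧ dist sn p₂ = r by
    obtain ⟨sn, hs1, hs2⟩ := h
    refine ⟨sn, hs1, hs2, fun q hq => ?_⟩
    have : segment ℝ p₁ p₂ ⊆ Metric.closedBall sn r := by
      apply (convex_closedBall sn r).segment_subset
      · simpa [Metric.mem_closedBall, dist_comm] using hs1.le
      · simpa [Metric.mem_closedBall, dist_comm] using hs2.le
    simpa [Metric.mem_closedBall, dist_comm] using this hq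
  rcases eq_or_ne p₁ p₂ with heq | hne
  · refine ⟨p₁ + r • EuclideanSpace.single 0 (1:ℝ), ?_, ?_⟩
    · rw [dist_eq_norm, add_sub_cancel_left, norm_smul, EuclideanSpace.norm_single]
      simp [abs_of_pos hrpos]
    · rw [← heq, dist_eq_norm, add_sub_cancel_left, norm_smul, EuclideanSpace.norm_single]
      simp [abs_of_pos hrpos]
  · set v : EuclideanSpace ℝ (Fin 2) := p₂ - p₁ with hv
    have hvne : v ≠ 0 := sub_ne_zero.mpr (Ne.symm hne)
    set d : ℝ := ‖v‖ with hdd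
    have hdpos : 0 < d := norm_pos_iff.mpr hvne
    have hdlt : d < 2 * r := by
      have : dist p₂ p₁ < 2 * r := by
        rw [dist_comm]; calc dist p₁ p₂ < 2 / Real.sqrt N := hd2
        _ = 2 * r := by rw [hr]; ring
      simpa [hdd, hv, ← dist_eq_norm] using this
    set w : EuclideanSpace ℝ (Fin 2) :=
      (EuclideanSpace.equiv (Fin 2) ℝ).symm ![-(v 1), v 0] with hw
    have hw0 : w 0 = -(v 1) := rfl
    have hw1 : w 1 = v 0 := rfl
    have hinner : ⟪v, w⟫ = 0 := by
      rw [PiLp.inner_apply, Fin.sum_univ_two, hw0, hw1]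
      simp [RCLike.inner_apply]
      ring
    have hnw : ‖w‖ = d := by
      rw [hdd, EuclideanSpace.norm_eq, EuclideanSpace.norm_eq,
        Fin.sum_univ_two, Fin.sum_univ_two, hw0, hw1]
      rw [norm_neg, add_comm]
    set hh : ℝ := Real.sqrt (r ^ 2 - (d / 2) ^ 2) with hhh
    have hsq : hh ^ 2 = r ^ 2 - (d / 2) ^ 2 := by
      apply Real.sq_sqrt
      nlinarith
    set sn : EuclideanSpace ℝ (Fin 2) := midpoint ℝ p₁ p₂ + (hh / d) • w with hsn
    have key : ∀ a : ℝ, a ^ 2 = (1/2 : ℝ) ^ 2 → ‖a • v + (hh / d) • w‖ = r := by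
      intro a ha
      have hnn : (0:ℝ) ≤ ‖a • v + (hh / d) • w‖ := norm_nonneg _
      have h2 : ‖a • v + (hh / d) • w‖ ^ 2 = r ^ 2 := by
        rw [aux_norm v w hinner, hnw, ha]
        field_simp
        nlinarith
      calc ‖a • v + (hh / d) • w‖ = Real.sqrt (‖a • v + (hh / d) • w‖ ^ 2) :=
            (Real.sqrt_sq hnn).symm
        _ = Real.sqrt (r ^ 2) := by rw [h2]
        _ = r := Real.sqrt_sq hrpos.le
    refine ⟨sn, ?_, ?_⟩
    · rw [dist_eq_norm, hsn]
      have : midpoint ℝ p₁ p₂ + (hh / d) • w - p₁ = (1/2 : ℝ) • v + (hh / d) • w := by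
        rw [hv, midpoint_eq_smul_add, invOf_eq_inv]
        module
      rw [this]
      exact key _ (by norm_num)
    · rw [dist_eq_norm, hsn]
      have : midpoint ℝ p₁ p₂ + (hh / d) • w - p₂ = (-(1/2) : ℝ) • v + (hh / d) • w := by
        rw [hv, midpoint_eq_smul_add, invOf_eq_inv]
        module
      rw [this]
      exact key _ (by norm_num)
end

section
/- Let s₀ = (0,0), let n ≥ 2, noise N ≥ 0, threshold β > 1 and d > 0. Then the value x = d/(√(β(n−1+N·d²)) + 1) solves (d−x)² = x²·β·(n−1+N·d²), and consequently the reception zone of s₀ in any uniform network with stations s₀, s₁, …, s_{n-1}, noise N and threshold β, whose other stations s₁, …, s_{n-1} are all at distance ≥ d from s₀, contains the ball B(s₀, d/(√(β(n−1+N·d²))+1)). -/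
lemma key_aux14 (n : ℕ) (d N β x r : ℝ) (hN : 0 ≤ N) (hβ : 1 < β)
    (hxpos : 0 < x) (hrpos : 0 < r) (hrx : r ≤ x) (hdxpos : 0 < d - x)
    (hfirst : (d - x) ^ 2 = x ^ 2 * β * (n + N * d ^ 2)) :
    β * ((n:ℝ) + N * (d - r)^2) * r^2 ≤ (d - r)^2 := by
  have h1 : (d - x) * r ≤ (d - r) * x := by nlinarith
  have h2 : (d - x)^2 * r^2 ≤ (d - r)^2 * x^2 := by
    have := mul_self_le_mul_self (mul_nonneg hdxpos.le hrpos.le) h1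
    nlinarith [this]
  have h3 : (d - r)^2 ≤ d^2 := by nlinarith
  have h5 : β * ((n:ℝ) + N * d^2) * r^2 * x^2 ≤ (d - r)^2 * x^2 := by nlinarith
  have h6 : β * ((n:ℝ) + N * d^2) * r^2 ≤ (d - r)^2 :=
    le_of_mul_le_mul_right h5 (by positivity)
  have h7 : 0 ≤ β * N * r^2 * (d^2 - (d - r)^2) :=
    mul_nonneg (by positivity) (by linarith)
  nlinarith [h6, h7]

theorem stmt14 (n : ℕ) (hn : 1 ≤ n) (d N β x : ℝ) (hd : 0 < d) (hN : 0 ≤ N) (hβ : 1 < β)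
    (hx : x = d / (Real.sqrt (β * (n + N * d ^ 2)) + 1)) :
    (d - x) ^ 2 = x ^ 2 * β * (n + N * d ^ 2) ∧
    ∀ s : Fin (n + 1) → EuclideanSpace ℝ (Fin 2),
      (∀ i, i ≠ 0 → d ≤ dist (s 0) (s i)) →
      Metric.closedBall (s 0) x ⊆
        ({p | p ∉ Set.range s ∧
            β ≤ (dist (s 0) p ^ 2)⁻¹ /
              ((∑ i ∈ Finset.univ.filter (· ≠ (0 : Fin (n + 1))), (dist (s i) p ^ 2)⁻¹) + N)}
          ∪ {s 0}) := by
  have hn1 : (1:ℝ) ≤ (n:ℝ) := by exact_mod_cast hn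
  have hNd : 0 ≤ N * d ^ 2 := mul_nonneg hN (sq_nonneg d)
  have hval : 1 < β * (n + N * d ^ 2) := by nlinarith
  set S := Real.sqrt (β * (n + N * d ^ 2)) with hS
  have hsq : S ^ 2 = β * (n + N * d ^ 2) := Real.sq_sqrt (by linarith)
  have hS1 : 1 < S := by
    nlinarith [Real.sqrt_nonneg (β * (n + N * d ^ 2))]
  have hSpos : 0 < S + 1 := by linarith
  have hxpos : 0 < x := by rw [hx]; positivity
  have hxd : x * (S + 1) = d := by rw [hx]; field_simp
  have hdx : d - x = x * S := by nlinarith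
  have hfirst : (d - x) ^ 2 = x ^ 2 * β * (n + N * d ^ 2) := by
    rw [hdx]; nlinarith
  have hdxpos : 0 < d - x := by rw [hdx]; nlinarith
  refine ⟨hfirst, ?_⟩
  intro s hs p hp
  rcases eq_or_ne p (s 0) with rfl | hne
  · right; rfl
  simp only [Metric.mem_closedBall, dist_comm] at hp
  set r := dist (s 0) p with hr
  clear_value r
  have hrpos : 0 < r := by rw [hr]; exact dist_pos.mpr (Ne.symm hne)
  have hrx : r ≤ x := by rw [hr, dist_comm]; exact hp
  have hdr : 0 < d - r := by linarith
  have hdist : ∀ i : Fin (n+1), i ≠ 0 → d - r ≤ dist (s i) p := by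
    intro i hi
    have h1 := hs i hi
    have h2 := dist_triangle (s 0) p (s i)
    have := dist_comm (s i) p
    linarith [dist_comm p (s i)]
  left
  constructor
  · rintro ⟨i, rfl⟩
    rcases eq_or_ne i 0 with rfl | hi
    · exact hne rfl
    · have := hdist i hi
      simp at this; linarith
  · have hcard : (Finset.univ.filter (· ≠ (0 : Fin (n + 1)))).card = n := by
      rw [Finset.filter_ne', Finset.card_erase_of_mem (Finset.mem_univ _)]
      simp
    have hsum : (∑ i ∈ Finset.univ.filter (· ≠ (0 : Fin (n + 1))), (dist (s i) p ^ 2)⁻¹)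
        ≤ n * ((d - r)^2)⁻¹ := by
      calc (∑ i ∈ Finset.univ.filter (· ≠ (0 : Fin (n + 1))), (dist (s i) p ^ 2)⁻¹)
          ≤ ∑ i ∈ Finset.univ.filter (· ≠ (0 : Fin (n + 1))), ((d - r)^2)⁻¹ := by
            apply Finset.sum_le_sum
            intro i hi
            have hi' : i ≠ 0 := (Finset.mem_filter.mp hi).2
            have h1 := hdist i hi'
            have : (d - r)^2 ≤ dist (s i) p ^ 2 := by nlinarith
            exact inv_anti₀ (by positivity) this
        _ = n * ((d - r)^2)⁻¹ := by rw [Finset.sum_const, hcard]; simp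
    have hsumpos : 0 < (∑ i ∈ Finset.univ.filter (· ≠ (0 : Fin (n + 1))), (dist (s i) p ^ 2)⁻¹) + N := by
      have : 0 < ∑ i ∈ Finset.univ.filter (· ≠ (0 : Fin (n + 1))), (dist (s i) p ^ 2)⁻¹ := by
        apply Finset.sum_pos
        · intro i hi
          have hi' : i ≠ 0 := (Finset.mem_filter.mp hi).2
          have h1 := hdist i hi'
          have : 0 < dist (s i) p := by linarith
          positivity
        · refine ⟨⟨n, by omega⟩, Finset.mem_filter.mpr ⟨Finset.mem_univ _, ?_⟩⟩
          exact Fin.ne_of_val_ne (by simp; omega)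
      linarith
    rw [le_div_iff₀ hsumpos]
    -- key inequality : β * (n + N*(d-r)^2) * r^2 ≤ (d-r)^2
    have hkey : β * ((n:ℝ) + N * (d - r)^2) * r^2 ≤ (d - r)^2 :=
      key_aux14 n d N β x r hN hβ hxpos hrpos hrx hdxpos hfirst
    have hmid : β * ((n:ℝ) * ((d - r)^2)⁻¹ + N) ≤ (r^2)⁻¹ := by
      have e1 : (n:ℝ) * ((d - r)^2)⁻¹ + N = ((n:ℝ) + N * (d - r)^2) / (d - r)^2 := by
        field_simp
      have hc : (0:ℝ) < (d - r)^2 := by positivity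
      have hr2 : (0:ℝ) < r^2 := by positivity
      rw [e1, ← mul_div_assoc, div_le_iff₀ hc, inv_mul_eq_div, le_div_iff₀ hr2]
      exact hkey
    calc β * ((∑ i ∈ Finset.univ.filter (· ≠ (0 : Fin (n + 1))), (dist (s i) p ^ 2)⁻¹) + N)
        ≤ β * ((n:ℝ) * ((d - r)^2)⁻¹ + N) := by
          apply mul_le_mul_of_nonneg_left _ (by linarith)
          linarith
      _ ≤ (r^2)⁻¹ := hmid
      _ = (dist (s 0) p ^ 2)⁻¹ := by rw [hr]
end

section
/- Let s₀ = (0,0), s₁,…,s_{n-1} ∈ ℝ² with minimum distance d > 0 from s₀ to any other station, noise N ≥ 0, and β > 1. Every point p in the reception zone Z₀ (i.e., with dist(s₀,p)^{-2} ≥ β(Σ_{i≥1}dist(sᵢ,p)^{-2} + N)) satisfies dist(s₀, p) ≤ d/(√(β(1+N·d²)) − 1). -/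
set_option maxHeartbeats 1000000 in
theorem stmt15 (n : ℕ) (s : Fin (n + 1) → EuclideanSpace ℝ (Fin 2)) (N β d : ℝ)
    (hN : 0 ≤ N) (hβ : 1 < β) (hd : 0 < d)
    (hmin : ∀ i, i ≠ 0 → d ≤ dist (s 0) (s i))
    (hatt : ∃ i, i ≠ (0 : Fin (n + 1)) ∧ dist (s 0) (s i) = d)
    (p : EuclideanSpace ℝ (Fin 2)) (hp : p ∉ Set.range s)
    (hrec : β * ((∑ i ∈ Finset.univ.filter (· ≠ (0 : Fin (n + 1))), (dist (s i) p ^ 2)⁻¹) + N) ≤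
      (dist (s 0) p ^ 2)⁻¹) :
    dist (s 0) p ≤ d / (Real.sqrt (β * (1 + N * d ^ 2)) - 1) := by
  obtain ⟨i, hi0, hid⟩ := hatt
  set r := dist (s 0) p with hrdef
  set t := dist (s i) p with htdef
  have hr : 0 < r := dist_pos.mpr (fun h => hp ⟨0, h⟩)
  have ht : 0 < t := dist_pos.mpr (fun h => hp ⟨i, h⟩)
  have htri : t ≤ d + r := by
    have := dist_triangle (s i) (s 0) p
    rw [dist_comm (s i) (s 0), hid] at this
    exact this
  have hsum : (t ^ 2)⁻¹ ≤
      ∑ j ∈ Finset.univ.filter (· ≠ (0 : Fin (n + 1))), (dist (s j) p ^ 2)⁻¹ := by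
    apply Finset.single_le_sum (f := fun j => (dist (s j) p ^ 2)⁻¹)
    · intro j _
      positivity
    · exact Finset.mem_filter.mpr ⟨Finset.mem_univ i, hi0⟩
  have hβ0 : 0 < β := by linarith
  have hkey : β * ((t ^ 2)⁻¹ + N) ≤ (r ^ 2)⁻¹ := by
    refine le_trans (by nlinarith) hrec
  have ht2pos : (0:ℝ) < t ^ 2 := by positivity
  have hr2pos : (0:ℝ) < r ^ 2 := by positivity
  have h1 : β * (r ^ 2 + N * r ^ 2 * t ^ 2) ≤ t ^ 2 := by
    calc β * (r ^ 2 + N * r ^ 2 * t ^ 2)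
        = β * ((t ^ 2)⁻¹ + N) * (r ^ 2 * t ^ 2) := by
          field_simp
      _ ≤ (r ^ 2)⁻¹ * (r ^ 2 * t ^ 2) :=
          mul_le_mul_of_nonneg_right hkey (by positivity)
      _ = t ^ 2 := by field_simp
  set c := Real.sqrt (β * (1 + N * d ^ 2)) with hcdef
  have hc2 : c ^ 2 = β * (1 + N * d ^ 2) := Real.sq_sqrt (by positivity)
  have hc0 : 0 ≤ c := Real.sqrt_nonneg _
  have hc1 : 1 < c := by
    nlinarith [hc2, mul_nonneg hN (sq_nonneg d)]
  have hnr : 0 < 1 - β * N * r ^ 2 := by nlinarith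
  have ht2 : t ^ 2 ≤ (d + r) ^ 2 := by nlinarith
  have hx : 0 ≤ (1 - β * N * r ^ 2) * ((d + r) ^ 2 - t ^ 2) := by
    apply mul_nonneg (le_of_lt hnr); linarith
  have h3 : (0:ℝ) ≤ β * N * r ^ 2 * (2 * d * r + r ^ 2) := by positivity
  have h4 : (0:ℝ) ≤ β * N * r ^ 2 * t ^ 2 := by positivity
  have hkey2 : (c * r) ^ 2 ≤ (d + r) ^ 2 := by
    have hc2r : (c * r) ^ 2 = β * (1 + N * d ^ 2) * r ^ 2 := by
      rw [mul_pow, hc2]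
    rw [hc2r]
    nlinarith [h1, hx, h3, h4]
  have hcr : c * r ≤ d + r := by
    have h := Real.sqrt_le_sqrt hkey2
    rwa [Real.sqrt_sq (mul_nonneg hc0 hr.le), Real.sqrt_sq (by linarith)] at h
  rw [le_div_iff₀ (by linarith : (0:ℝ) < c - 1)]
  nlinarith [hcr]
end

section
/- Let s₀ = 0 and s₁ = 1 on the real line, with powers ψ₀ = 1 and ψ₁ ≥ 1, no noise, and threshold β > 1. Then the set {x ∈ ℝ : (x−1)² ≥ β·ψ₁·x², x ≠ 0,1} ∪ {0} equals the interval [L, R] with R = (√(βψ₁)−1)/(βψ₁−1) and L = −(√(βψ₁)+1)/(βψ₁−1), and −L/R = (√(βψ₁)+1)/(√(βψ₁)−1) ≤ (√β+1)/(√β−1). -/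
theorem stmt17 (β ψ₁ : ℝ) (hβ : 1 < β) (hψ : 1 ≤ ψ₁)
    (L R : ℝ) (hR : R = (Real.sqrt (β * ψ₁) - 1) / (β * ψ₁ - 1))
    (hL : L = -((Real.sqrt (β * ψ₁) + 1) / (β * ψ₁ - 1))) :
    ({x : ℝ | x ≠ 0 ∧ x ≠ 1 ∧ β * ψ₁ * x ^ 2 ≤ (x - 1) ^ 2} ∪ {0}) = Set.Icc L R ∧
    -L / R = (Real.sqrt (β * ψ₁) + 1) / (Real.sqrt (β * ψ₁) - 1) ∧
    (Real.sqrt (β * ψ₁) + 1) / (Real.sqrt (β * ψ₁) - 1) ≤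
      (Real.sqrt β + 1) / (Real.sqrt β - 1) := by
  set a := β * ψ₁ with ha_def
  have ha : 1 < a := by nlinarith
  have ha1 : (0:ℝ) < a - 1 := by linarith
  set s := Real.sqrt a with hs_def
  have hs2 : s ^ 2 = a := Real.sq_sqrt (by linarith)
  have hs0 : 0 ≤ s := Real.sqrt_nonneg a
  have hs1 : 1 < s := by nlinarith
  have hRv : R * (a - 1) = s - 1 := by rw [hR]; field_simp
  have hLv : L * (a - 1) = -(s + 1) := by rw [hL]; field_simp
  have hRpos : 0 < R := by nlinarith
  have hLneg : L < 0 := by nlinarith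
  have hR1 : R < 1 := by nlinarith
  have hid : ∀ x : ℝ, (a - 1) * ((x - L) * (x - R)) = a * x ^ 2 - (x - 1) ^ 2 := by
    intro x
    have h : (a - 1) * ((a - 1) * ((x - L) * (x - R))) =
        (a - 1) * (a * x ^ 2 - (x - 1) ^ 2) := by
      have : (a - 1) * ((a - 1) * ((x - L) * (x - R))) =
          ((a - 1) * x - L * (a - 1)) * ((a - 1) * x - R * (a - 1)) := by ring
      rw [this, hRv, hLv]
      nlinarith [hs2]
    exact mul_left_cancel₀ (by linarith : (a - 1) ≠ 0) h
  refine ⟨?_, ?_, ?_⟩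
  · ext x
    simp only [Set.mem_union, Set.mem_setOf_eq, Set.mem_singleton_iff, Set.mem_Icc]
    constructor
    · rintro (⟨hx0, hx1, hineq⟩ | rfl)
      · have hprod : (x - L) * (x - R) ≤ 0 := by nlinarith [hid x]
        constructor
        · by_contra h; push_neg at h; nlinarith
        · by_contra h; push_neg at h; nlinarith
      · constructor <;> linarith
    · rintro ⟨h1, h2⟩
      rcases eq_or_ne x 0 with rfl | hx0
      · right; rfl
      · left
        refine ⟨hx0, by intro h; rw [h] at h2; linarith, ?_⟩
        nlinarith [hid x, mul_nonneg (sub_nonneg.2 h1) (sub_nonneg.2 h2)]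
  · rw [hL, hR, neg_neg]
    have h1 : (a - 1) ≠ 0 := by linarith
    have h2 : s - 1 ≠ 0 := by linarith
    field_simp
  · have hb1 : 1 < Real.sqrt β := by
      have := Real.sq_sqrt (by linarith : (0:ℝ) ≤ β)
      nlinarith [Real.sqrt_nonneg β]
    have hbs : Real.sqrt β ≤ s := Real.sqrt_le_sqrt (by nlinarith)
    rw [div_le_div_iff₀ (by linarith) (by linarith)]
    nlinarith
end

section
/- Let s₀,…,s_{n-1} ∈ ℝ² with sᵢ ≠ s₀ for i ≥ 1, noise N ≥ 0, and constant β > 1. Let Z₀ be the reception zone of s₀, δ = sup{r : B(s₀,r) ⊆ Z₀}, Δ = inf{r : Z₀ ⊆ B(s₀,r)}. Then Δ/δ ≤ (√β + 1)/(√β − 1). -/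
set_option maxHeartbeats 1000000


theorem stmt19 (n : ℕ) (s : Fin (n + 1) → EuclideanSpace ℝ (Fin 2)) (N β : ℝ)
    (hs : ∀ i, i ≠ 0 → s i ≠ s 0) (hN : 0 ≤ N) (hβ : 1 < β)
    (Z₀ : Set (EuclideanSpace ℝ (Fin 2)))
    (hZ : Z₀ = {p | p ∉ Set.range s ∧
        β * ((∑ i ∈ Finset.univ.filter (· ≠ (0 : Fin (n + 1))), (dist (s i) p ^ 2)⁻¹) + N) ≤
          (dist (s 0) p ^ 2)⁻¹} ∪ {s 0})
    (δ Δ : ℝ)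
    (hδ : δ = sSup {r : ℝ | Metric.closedBall (s 0) r ⊆ Z₀})
    (hΔ : Δ = sInf {r : ℝ | Z₀ ⊆ Metric.closedBall (s 0) r}) :
    Δ / δ ≤ (Real.sqrt β + 1) / (Real.sqrt β - 1) := by
  have hβ0 : 0 < β := lt_trans one_pos hβ
  have hsb : 1 < Real.sqrt β := by
    rw [show (1:ℝ) = Real.sqrt 1 by simp]
    exact Real.sqrt_lt_sqrt (by norm_num) hβ
  have hsb1 : 0 < Real.sqrt β - 1 := by linarith
  have hsb2 : 0 < Real.sqrt β + 1 := by linarith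
  set c : ℝ := (Real.sqrt β - 1) / (Real.sqrt β + 1) with hc
  have hc0 : 0 < c := div_pos hsb1 hsb2
  have hs0Z : s 0 ∈ Z₀ := by rw [hZ]; exact Or.inr rfl
  -- key geometric lemma
  have key : ∀ p ∈ Z₀, p ≠ s 0 →
      Metric.closedBall (s 0) (dist (s 0) p * c) ⊆ Z₀ := by
    intro p hpZ hps q hq
    rw [hZ] at hpZ
    rcases hpZ with hp | hp
    · obtain ⟨hpr, hpineq⟩ := hp
      set d := dist (s 0) p with hd
      have hd0 : 0 < d := dist_pos.2 (fun h => hps h.symm)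
      by_cases hq0 : q = s 0
      · rw [hZ]; exact Or.inr hq0
      have hr0 : 0 < dist (s 0) q := dist_pos.2 (fun h => hq0 h.symm)
      set r := dist (s 0) q with hr
      have hrc : r ≤ d * c := by
        rw [hr, dist_comm]; exact Metric.mem_closedBall.1 hq
      have hrb : r * (Real.sqrt β + 1) ≤ d * (Real.sqrt β - 1) := by
        calc r * (Real.sqrt β + 1)
            ≤ d * ((Real.sqrt β - 1)/(Real.sqrt β + 1)) * (Real.sqrt β + 1) :=
              mul_le_mul_of_nonneg_right hrc hsb2.le
          _ = d * (Real.sqrt β - 1) := by field_simp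
      have hrd : r < d := by nlinarith
      have hsum_nonneg : ∀ i ∈ Finset.univ.filter (· ≠ (0 : Fin (n+1))),
          (0:ℝ) ≤ (dist (s i) p ^ 2)⁻¹ := fun i _ => by positivity
      have hx0 : ∀ i : Fin (n+1), 0 < dist (s i) p := by
        intro i; exact dist_pos.2 (fun h => hpr ⟨i, h⟩)
      have hx : ∀ i : Fin (n+1), i ≠ 0 → Real.sqrt β * d ≤ dist (s i) p := by
        intro i hi
        have hxi0 : 0 < dist (s i) p := hx0 i
        have hx2 : (0:ℝ) < dist (s i) p ^ 2 := by positivity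
        have hd2 : (0:ℝ) < d ^ 2 := by positivity
        have h1 : β / dist (s i) p ^ 2 ≤ 1 / d ^ 2 := by
          rw [div_eq_mul_inv, one_div]
          refine le_trans ?_ hpineq
          have hsi := Finset.single_le_sum hsum_nonneg
            (Finset.mem_filter.2 ⟨Finset.mem_univ i, hi⟩)
          nlinarith [hsi]
        have h2 := (div_le_div_iff₀ hx2 hd2).1 h1
        calc Real.sqrt β * d = Real.sqrt (β * d ^ 2) := by
              rw [Real.sqrt_mul hβ0.le, Real.sqrt_sq hd0.le]
          _ ≤ Real.sqrt (dist (s i) p ^ 2) := Real.sqrt_le_sqrt (by linarith)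
          _ = dist (s i) p := Real.sqrt_sq (hx0 i).le
      have hkey : ∀ i : Fin (n+1), i ≠ 0 →
          dist (s i) p * r ≤ dist (s i) q * d := by
        intro i hi
        have htri : dist (s i) p - d - r ≤ dist (s i) q := by
          have h3 : dist (s i) p ≤ dist (s i) (s 0) + d := by
            have := dist_triangle (s i) (s 0) p; linarith
          have h4 : dist (s i) (s 0) ≤ dist (s i) q + r := by
            have := dist_triangle (s i) q (s 0)
            have h5 : dist q (s 0) = r := by rw [hr, dist_comm]
            linarith
          linarith
        nlinarith [mul_le_mul_of_nonneg_right (hx i hi) (sub_nonneg.2 hrd.le),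
          mul_le_mul_of_nonneg_left hrb hd0.le,
          mul_le_mul_of_nonneg_right htri hd0.le]
      have hy0 : ∀ i : Fin (n+1), i ≠ 0 → 0 < dist (s i) q := by
        intro i hi
        have hxr : 0 < dist (s i) p * r := mul_pos (hx0 i) hr0
        nlinarith [hkey i hi, hxr, hd0]
      have hterm : ∀ i : Fin (n+1), i ≠ 0 →
          (dist (s i) q ^ 2)⁻¹ ≤ d ^ 2 / r ^ 2 * (dist (s i) p ^ 2)⁻¹ := by
        intro i hi
        have hyi := hy0 i hi
        have hxi := hx0 i
        have h2 : (dist (s i) p * r) * (dist (s i) p * r)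
            ≤ (dist (s i) q * d) * (dist (s i) q * d) :=
          mul_le_mul (hkey i hi) (hkey i hi) (by positivity) (by positivity)
        have rhs : d ^ 2 / r ^ 2 * (dist (s i) p ^ 2)⁻¹
            = d ^ 2 / (r ^ 2 * dist (s i) p ^ 2) := by
          field_simp
        rw [inv_eq_one_div, rhs, div_le_div_iff₀ (by positivity) (by positivity)]
        nlinarith [h2]
      have hsum : (∑ i ∈ Finset.univ.filter (· ≠ (0 : Fin (n+1))), (dist (s i) q ^ 2)⁻¹)
          ≤ d ^ 2 / r ^ 2 *
            ∑ i ∈ Finset.univ.filter (· ≠ (0 : Fin (n+1))), (dist (s i) p ^ 2)⁻¹ := by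
        rw [Finset.mul_sum]
        refine Finset.sum_le_sum fun i hi => ?_
        exact hterm i (Finset.mem_filter.1 hi).2
      have hdr1 : (1:ℝ) ≤ d ^ 2 / r ^ 2 := by
        rw [le_div_iff₀ (by positivity)]
        nlinarith [hrd, hr0]
      rw [hZ]
      left
      constructor
      · rintro ⟨i, hi⟩
        by_cases h0 : i = 0
        · exact hq0 (by rw [← hi, h0])
        · exact (hy0 i h0).ne' (by rw [hi, dist_self])
      · calc β * ((∑ i ∈ Finset.univ.filter (· ≠ (0 : Fin (n+1))), (dist (s i) q ^ 2)⁻¹) + N)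
            ≤ β * ((d ^ 2 / r ^ 2 *
                ∑ i ∈ Finset.univ.filter (· ≠ (0 : Fin (n+1))), (dist (s i) p ^ 2)⁻¹)
                + d ^ 2 / r ^ 2 * N) := by
              refine mul_le_mul_of_nonneg_left (add_le_add hsum ?_) hβ0.le
              exact le_mul_of_one_le_left hN hdr1
          _ = d ^ 2 / r ^ 2 * (β * ((∑ i ∈ Finset.univ.filter (· ≠ (0 : Fin (n+1))),
                (dist (s i) p ^ 2)⁻¹) + N)) := by ring
          _ ≤ d ^ 2 / r ^ 2 * (d ^ 2)⁻¹ :=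
              mul_le_mul_of_nonneg_left hpineq (by positivity)
          _ = (r ^ 2)⁻¹ := by
              have hdne : d ≠ 0 := hd0.ne'
              have hrne : r ≠ 0 := hr0.ne'
              field_simp
    · exact absurd (Set.mem_singleton_iff.1 hp) hps
  by_cases hbdd : BddAbove {r : ℝ | Metric.closedBall (s 0) r ⊆ Z₀}
  · have h0mem : (0:ℝ) ∈ {r : ℝ | Metric.closedBall (s 0) r ⊆ Z₀} := by
      intro x hx
      have hx0 : x = s 0 := by
        have := Metric.mem_closedBall.1 hx
        have := dist_le_zero.1 this
        exact this
      rw [hx0]; exact hs0Z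
    have hδ0 : 0 ≤ δ := hδ ▸ le_csSup hbdd h0mem
    rcases hδ0.eq_or_lt with h | h
    · rw [← h, div_zero]; positivity
    · have main : Δ ≤ δ / c := by
        apply le_of_forall_lt_imp_le_of_dense
        intro a ha
        rcases le_or_gt a 0 with h0 | h0
        · exact le_trans h0 (div_nonneg hδ0 hc0.le)
        · have hnot : a ∉ {r : ℝ | Z₀ ⊆ Metric.closedBall (s 0) r} := by
            intro hmem
            have hbdlow : BddBelow {r : ℝ | Z₀ ⊆ Metric.closedBall (s 0) r} := by
              refine ⟨0, fun x hx => ?_⟩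
              have := Metric.mem_closedBall.1 (hx hs0Z)
              simpa using this
            have : Δ ≤ a := hΔ ▸ csInf_le hbdlow hmem
            linarith
          obtain ⟨p, hpZ, hpd⟩ : ∃ p ∈ Z₀, p ∉ Metric.closedBall (s 0) a := by
            by_contra hcon
            push_neg at hcon
            exact hnot fun x hx => hcon x hx
          have hda : a < dist (s 0) p := by
            rw [Metric.mem_closedBall, not_le, dist_comm] at hpd
            exact hpd
          have hps : p ≠ s 0 := by
            intro h'
            rw [h', dist_self] at hda
            linarith
          have hmemδ : dist (s 0) p * c ∈ {r : ℝ | Metric.closedBall (s 0) r ⊆ Z₀} :=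
            key p hpZ hps
          have hle : dist (s 0) p * c ≤ δ := hδ ▸ le_csSup hbdd hmemδ
          rw [le_div_iff₀ hc0]
          nlinarith [hle, hda, hc0]
      have ht : c * (Real.sqrt β + 1) = Real.sqrt β - 1 := by
        rw [hc]; field_simp
      have hΔc : Δ * c ≤ δ := (le_div_iff₀ hc0).1 main
      rw [div_le_div_iff₀ h hsb1]
      calc Δ * (Real.sqrt β - 1) = Δ * c * (Real.sqrt β + 1) := by rw [mul_assoc, ht]
        _ ≤ δ * (Real.sqrt β + 1) := mul_le_mul_of_nonneg_right hΔc hsb2.le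
        _ = (Real.sqrt β + 1) * δ := by ring
  · have hδ0 : δ = 0 := by rw [hδ]; exact Real.sSup_of_not_bddAbove hbdd
    rw [hδ0, div_zero]
    positivity
end
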